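/- Let M be a graded R-module, N a graded submodule, and S ⊆ h(R) a multiplicatively closed set with (N :_R M) ∩ S = ∅. If N is a graded s-prime submodule for some s ∈ S, then the localization S⁻¹N is a graded prime S⁻¹R-submodule of S⁻¹M. -/

import Mathlib

open DirectSum

variable {G R M : Type*}

/-- A submodule is graded if it contains all homogeneous components of its elements. -/
def IsGradedSubmodule [CommRing R] [AddCommGroup M] [Module R M] [DecidableEq G]
    (ℳ : G → AddSubgroup M) [DirectSum.Decomposition ℳ] (N : Submodule R M) : Prop :=
  ∀ m ∈ N, ∀ g : G, (DirectSum.decompose ℳ m g : M) ∈ N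

/-- A graded ideal of a graded ring. -/
def IsGradedIdeal [CommRing R] [DecidableEq G]
    (𝒜 : G → AddSubgroup R) [DirectSum.Decomposition 𝒜] (P : Ideal R) : Prop :=
  ∀ r ∈ P, ∀ g : G, (DirectSum.decompose 𝒜 r g : R) ∈ P

/-- `N` is a graded `s`-prime submodule: `s ∉ (N :_R M)` and for homogeneous `r`, `m`,
`r • m ∈ N` implies `s * r ∈ (N :_R M)` or `s • m ∈ N`. -/
def IsGradedSPrime [CommRing R] [AddCommGroup M] [Module R M]
    (𝒜 : G → AddSubgroup R) (ℳ : G → AddSubgroup M) (s : R) (N : Submodule R M) : Prop :=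
  s ∉ N.colon ⊤ ∧
  ∀ (r : R) (m : M), SetLike.IsHomogeneousElem 𝒜 r → SetLike.IsHomogeneousElem ℳ m →
    r • m ∈ N → s * r ∈ N.colon ⊤ ∨ s • m ∈ N

/-- `P` is a graded `s`-prime ideal. -/
def IsGradedSPrimeIdeal [CommRing R]
    (𝒜 : G → AddSubgroup R) (s : R) (P : Ideal R) : Prop :=
  s ∉ P ∧
  ∀ a b : R, SetLike.IsHomogeneousElem 𝒜 a → SetLike.IsHomogeneousElem 𝒜 b →
    a * b ∈ P → s * a ∈ P ∨ s * b ∈ P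

/-- `K` is a graded prime submodule. -/
def IsGradedPrime [CommRing R] [AddCommGroup M] [Module R M]
    (𝒜 : G → AddSubgroup R) (ℳ : G → AddSubgroup M) (K : Submodule R M) : Prop :=
  K ≠ ⊤ ∧
  ∀ (r : R) (m : M), SetLike.IsHomogeneousElem 𝒜 r → SetLike.IsHomogeneousElem ℳ m →
    r • m ∈ K → r ∈ K.colon ⊤ ∨ m ∈ K

/-! An element `m / t` lies in `S⁻¹N` iff `u • m ∈ N` for some `u ∈ S`. Every `u ∈ S` is
homogeneous and `s * u ∉ (N : M)`, so the `s`-prime property turns `u • m ∈ N` into `s • m ∈ N`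
for homogeneous `m`; as `M` is generated by homogeneous elements, `S⁻¹N = ⊤` would force
`s ∈ (N : M)`. Similarly `(a / t) • (m / t') ∈ S⁻¹N` gives `(u * a) • m ∈ N`, hence
`s * u * a ∈ (N : M)` or `s • m ∈ N`, and `s * u` becomes a unit in `S⁻¹R`. -/

namespace LocalizedModule

variable [CommRing R] [AddCommGroup M] [Module R M] {S : Submonoid R}
  {N : Submodule R M}

theorem mk_mem_localized_iff {m : M} {t : S} :
    mk m t ∈ N.localized S ↔ ∃ u : S, (u : R) • m ∈ N := by
  simp only [Submodule.mem_localized', ← IsLocalizedModule.mk_eq_mk']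
  constructor
  · rintro ⟨n, hn, v, hv⟩
    obtain ⟨c, hc⟩ := mk_eq.mp hv
    refine ⟨c * v, ?_⟩
    rw [Submonoid.coe_mul, mul_smul, ← Submonoid.smul_def, ← Submonoid.smul_def, ← hc]
    exact N.smul_mem _ (N.smul_mem _ hn)
  · rintro ⟨u, hu⟩
    exact ⟨_, hu, u * t, mk_cancel_common_left u t m⟩

theorem mk_mem_colon_localized {a : R} {t : S} (u : S) (h : (u : R) * a ∈ N.colon ⊤) :
    Localization.mk a t ∈ (N.localized S).colon ⊤ := by
  refine Submodule.mem_colon.mpr fun y _ => ?_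
  induction y using induction_on with
  | h m w =>
    rw [mk_smul_mk, mk_mem_localized_iff]
    exact ⟨u, by simpa [mul_smul] using Submodule.mem_colon.mp h m trivial⟩

end LocalizedModule

section Graded

variable [CommRing R] [AddCommGroup M] [Module R M] {𝒜 : G → AddSubgroup R}
  {N : Submodule R M} {S : Submonoid R} {s : R}

theorem Submodule.mem_colon_top_of_forall_isHomogeneousElem [DecidableEq G]
    (ℳ : G → AddSubgroup M) [DirectSum.Decomposition ℳ] {r : R}
    (h : ∀ m, SetLike.IsHomogeneousElem ℳ m → r • m ∈ N) : r ∈ N.colon ⊤ :=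
  Submodule.mem_colon.mpr fun m _ =>
    DirectSum.Decomposition.inductionOn ℳ (by simp)
      (fun m => h m (SetLike.isHomogeneousElem_coe m))
      (fun _ _ hm hm' => by simpa only [smul_add] using N.add_mem hm hm') m

theorem IsGradedSPrime.localized_ne_top [DecidableEq G] {ℳ : G → AddSubgroup M}
    [DirectSum.Decomposition ℳ] (hsp : IsGradedSPrime 𝒜 ℳ s N)
    (hSh : ∀ u ∈ S, SetLike.IsHomogeneousElem 𝒜 u) (hsS : ∀ u ∈ S, s * u ∉ N.colon ⊤) :
    N.localized S ≠ ⊤ := by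
  refine fun htop =>
    hsp.1 (Submodule.mem_colon_top_of_forall_isHomogeneousElem ℳ fun m hm => ?_)
  have : LocalizedModule.mk m (1 : S) ∈ N.localized S := htop ▸ Submodule.mem_top
  obtain ⟨u, hu⟩ := LocalizedModule.mk_mem_localized_iff.mp this
  exact (hsp.2 u m (hSh u u.2) hm hu).resolve_left (hsS u u.2)

theorem IsGradedSPrime.mk_mem_colon_or_mk_mem_localized [AddMonoid G]
    [SetLike.GradedMonoid 𝒜] {ℳ : G → AddSubgroup M} (hsp : IsGradedSPrime 𝒜 ℳ s N)
    (hSh : ∀ u ∈ S, SetLike.IsHomogeneousElem 𝒜 u) (hsS : s ∈ S) {a : R} {m : M} {t t' : S}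
    (ha : SetLike.IsHomogeneousElem 𝒜 a) (hm : SetLike.IsHomogeneousElem ℳ m)
    (h : Localization.mk a t • LocalizedModule.mk m t' ∈ N.localized S) :
    Localization.mk a t ∈ (N.localized S).colon ⊤ ∨
      LocalizedModule.mk m t' ∈ N.localized S := by
  rw [LocalizedModule.mk_smul_mk, LocalizedModule.mk_mem_localized_iff] at h
  obtain ⟨u, hu⟩ := h
  rw [← mul_smul] at hu
  refine (hsp.2 _ m ((hSh u u.2).mul ha) hm hu).imp (fun hsua => ?_) (fun hsm => ?_)
  · exact LocalizedModule.mk_mem_colon_localized (⟨s, hsS⟩ * u)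
      (by rwa [Submonoid.coe_mul, mul_assoc])
  · exact LocalizedModule.mk_mem_localized_iff.mpr ⟨⟨s, hsS⟩, hsm⟩

end Graded

theorem stmt_12_general [AddGroup G] [DecidableEq G] [CommRing R] [AddCommGroup M] [Module R M]
    (𝒜 : G → AddSubgroup R) (ℳ : G → AddSubgroup M)
    [GradedRing 𝒜] [DirectSum.Decomposition ℳ]
    (S' : Submonoid R) (hSh : ∀ x ∈ S', SetLike.IsHomogeneousElem 𝒜 x)
    (N : Submodule R M)
    (hdisj : ∀ x ∈ S', x ∉ N.colon ⊤)
    (s : R) (hsS : s ∈ S') (hsp : IsGradedSPrime 𝒜 ℳ s N) :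
    N.localized S' ≠ ⊤ ∧
    ∀ (r : Localization S') (x : LocalizedModule S' M),
      (∃ (a t : R) (ht : t ∈ S'), SetLike.IsHomogeneousElem 𝒜 a ∧ r = Localization.mk a ⟨t, ht⟩) →
      (∃ (m : M) (t : R) (ht : t ∈ S'), SetLike.IsHomogeneousElem ℳ m ∧
        x = LocalizedModule.mk m ⟨t, ht⟩) →
      r • x ∈ N.localized S' →
        r ∈ (N.localized S').colon ⊤ ∨ x ∈ N.localized S' := by
  refine ⟨hsp.localized_ne_top hSh fun u hu => hdisj _ (mul_mem hsS hu), ?_⟩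
  rintro r x ⟨a, t, ht, ha, rfl⟩ ⟨m, t', ht', hm, rfl⟩ hrx
  exact hsp.mk_mem_colon_or_mk_mem_localized hSh hsS ha hm hrx

/-- if `S ⊆ h(R)` is multiplicatively closed with `(N :_R M) ∩ S = ∅` and
`N` is graded `s`-prime for some `s ∈ S`, then `S⁻¹N` is a graded prime
`S⁻¹R`-submodule of `S⁻¹M`, where homogeneity in the localization means being of the form
`a/t` with `a` homogeneous and `t ∈ S`. -/
theorem stmt_12 [AddGroup G] [DecidableEq G] [CommRing R] [AddCommGroup M] [Module R M]
    (𝒜 : G → AddSubgroup R) (ℳ : G → AddSubgroup M)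
    [GradedRing 𝒜] [DirectSum.Decomposition ℳ] [SetLike.GradedSMul 𝒜 ℳ]
    (S' : Submonoid R) (hS0 : (0 : R) ∉ S') (hSh : ∀ x ∈ S', SetLike.IsHomogeneousElem 𝒜 x)
    (N : Submodule R M) (hN : IsGradedSubmodule ℳ N)
    (hdisj : ∀ x ∈ S', x ∉ N.colon ⊤)
    (s : R) (hsS : s ∈ S') (hsp : IsGradedSPrime 𝒜 ℳ s N) :
    N.localized S' ≠ ⊤ ∧
    ∀ (r : Localization S') (x : LocalizedModule S' M),
      (∃ (a t : R) (ht : t ∈ S'), SetLike.IsHomogeneousElem 𝒜 a ∧ r = Localization.mk a ⟨t, ht⟩) →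
      (∃ (m : M) (t : R) (ht : t ∈ S'), SetLike.IsHomogeneousElem ℳ m ∧
        x = LocalizedModule.mk m ⟨t, ht⟩) →
      r • x ∈ N.localized S' →
        r ∈ (N.localized S').colon ⊤ ∨ x ∈ N.localized S' :=
  stmt_12_general 𝒜 ℳ S' hSh N hdisj s hsS hsp
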